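/- Let p be a prime and f, g ∈ KS_{p,2}. Then the pointwise product f·g, defined by (f·g)(s) = f(s)·g(s), also belongs to KS_{p,2}; in particular Δ^n (f·g)(s) ∈ p^n ℤ_p for all integers n ≥ 0 and all s ∈ ℤ_p. -/

import Mathlib

/-!
Call `f` *`a`-divisible* (`FwdDiffDvd π h a f`) if `π ^ (m + a) ∣ Δ^m f (x)` for all `m` and `x`,
so that `KS_{p,2}` means `0`-divisible for `π = p`. Then `Δ f` is `(a + 1)`-divisible, and the product rule
`Δ (f g) = Δf · g + f · Δg + Δf · Δg` lets an induction on `n` show that the product of an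
`a`-divisible and a `b`-divisible function is `(a + b)`-divisible.
-/

open Finset

/-- The forward difference operator `Δ_h^n` with increment `h ≥ 1`:
`Δ_h^n f(s) = ∑_{ν=0}^n (n choose ν)·(−1)^(n−ν)·f(s+νh)`. -/
noncomputable def deltaH (p : ℕ) [Fact p.Prime] (h : ℕ) (f : ℤ_[p] → ℤ_[p]) (n : ℕ)
    (s : ℤ_[p]) : ℤ_[p] :=
  ∑ ν ∈ Finset.range (n + 1),
    (n.choose ν : ℤ_[p]) * (-1) ^ (n - ν) * f (s + (ν : ℤ_[p]) * (h : ℤ_[p]))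

/-- `f ∈ KS_{p,2}`: `f` is continuous and satisfies the Kummer type congruences
`Δ^n f(s) ∈ p^n ℤ_p` for all integers `n ≥ 0` and all `s ∈ ℤ_p`. -/
def KS2 (p : ℕ) [Fact p.Prime] (f : ℤ_[p] → ℤ_[p]) : Prop :=
  Continuous f ∧ ∀ (n : ℕ) (s : ℤ_[p]), (p : ℤ_[p]) ^ n ∣ deltaH p 1 f n s

open fwdDiff

def FwdDiffDvd {M R : Type*} [AddCommMonoid M] [CommRing R] (π : R) (h : M) (a : ℕ)
    (f : M → R) : Prop :=
  ∀ (m : ℕ) (x : M), π ^ (m + a) ∣ (Δ_[h])^[m] f x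

namespace FwdDiffDvd

variable {M R : Type*} [AddCommMonoid M] [CommRing R] {π : R} {h : M}

theorem fwdDiff {a : ℕ} {f : M → R} (hf : FwdDiffDvd π h a f) :
    FwdDiffDvd π h (a + 1) (Δ_[h] f) := fun m x => by
  simpa only [Function.iterate_succ_apply, add_right_comm m 1 a, add_assoc] using hf (m + 1) x

theorem mul {a b : ℕ} {f g : M → R} (hf : FwdDiffDvd π h a f) (hg : FwdDiffDvd π h b g) :
    FwdDiffDvd π h (a + b) (f * g) := by
  intro n
  induction n generalizing a b f g with
  | zero =>
    intro x
    simpa [pow_add] using mul_dvd_mul (hf 0 x) (hg 0 x)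
  | succ n ih =>
    intro x
    have leibniz : Δ_[h] (f * g) = Δ_[h] f * g + f * Δ_[h] g + Δ_[h] f * Δ_[h] g :=
      fwdDiff_smul h f g
    rw [Function.iterate_succ_apply, leibniz, fwdDiff_iter_add, fwdDiff_iter_add]
    refine dvd_add (dvd_add ?_ ?_) ?_
    · exact (pow_dvd_pow π (by omega)).trans (ih hf.fwdDiff hg x)
    · exact (pow_dvd_pow π (by omega)).trans (ih hf hg.fwdDiff x)
    · exact (pow_dvd_pow π (by omega)).trans (ih hf.fwdDiff hg.fwdDiff x)

end FwdDiffDvd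

theorem deltaH_one_eq_fwdDiff_iter (p : ℕ) [Fact p.Prime] (f : ℤ_[p] → ℤ_[p]) (n : ℕ)
    (s : ℤ_[p]) : deltaH p 1 f n s = (Δ_[1])^[n] f s := by
  rw [fwdDiff_iter_eq_sum_shift, deltaH]
  refine Finset.sum_congr rfl fun k _ => ?_
  rw [zsmul_eq_mul]
  push_cast
  ring_nf

theorem ks2_iff (p : ℕ) [Fact p.Prime] (f : ℤ_[p] → ℤ_[p]) :
    KS2 p f ↔ Continuous f ∧ FwdDiffDvd (p : ℤ_[p]) 1 0 f := by
  simp only [KS2, FwdDiffDvd, add_zero, deltaH_one_eq_fwdDiff_iter]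

theorem stmt15 (p : ℕ) [Fact p.Prime] (f g : ℤ_[p] → ℤ_[p]) (hf : KS2 p f) (hg : KS2 p g) :
    KS2 p fun s => f s * g s := by
  rw [ks2_iff] at hf hg ⊢
  exact ⟨hf.1.mul hg.1, hf.2.mul hg.2⟩
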